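/- arXiv:1803.09009 — 2 statements merged into one kernel-verified Lean document; each statement's English description precedes it below -/
import Mathlib

section
/- Let α = a_1...a_n and β = b_1...b_n be consecutive k-ary necklaces of length n in lexicographic order (α before β), and let j be the smallest positive integer such that a_{n−j} ≠ k−1. If j ≤ n, then the prefixes of α and β of length n−j−1 are equal. -/
/-- A k-ary necklace: lexicographically least among all its cyclic rotations. -/
def IsNecklace {k : ℕ} (w : List (Fin k)) : Prop := ∀ r : ℕ, w ≤ w.rotate r

/-!
Let `m` be a position with `α[m] ≠ k - 1` and suppose `α` and `β` differ before `m`. Overwriting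
`α` from position `m` on with the top letter `k - 1` gives a word `w` dominating `α` letter by
letter, so each rotation of `w` dominates the same rotation of `α`, hence dominates `α`. The least
rotation `γ` of `w` is thus a necklace with `α < γ` (equality would force `w = α`), while
`γ ≤ w < β` since `w` keeps the prefix on which `α` is already below `β`.
-/

namespace List

variable {α : Type*}

theorem Forall₂.rotate {β : Type*} {R : α → β → Prop} {l₁ : List α} {l₂ : List β}
    (h : Forall₂ R l₁ l₂) (n : ℕ) : Forall₂ R (l₁.rotate n) (l₂.rotate n) := by
  rw [rotate_eq_drop_append_take_mod, rotate_eq_drop_append_take_mod, h.length_eq]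
  exact rel_append (forall₂_drop _ h) (forall₂_take _ h)

variable [LinearOrder α]

theorem forall₂_le_replicate {l : List α} {c : α} (hc : ∀ x ∈ l, x ≤ c) :
    Forall₂ (· ≤ ·) l (replicate l.length c) := by
  rwa [← map_const', forall₂_map_right_iff, forall₂_same]

theorem Forall₂.le {l₁ l₂ : List α} (h : Forall₂ (· ≤ ·) l₁ l₂) : l₁ ≤ l₂ := by
  induction h with
  | nil => exact le_rfl
  | @cons a b _ _ hab _ ih =>
    rcases hab.lt_or_eq with hab | rfl
    · exact (cons_lt_cons_iff.2 (Or.inl hab)).le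
    · exact cons_le_cons a ih

theorem lt_of_take_eq_of_take_ne : ∀ {m : ℕ} {a b c : List α},
    a < b → a.take m ≠ b.take m → c.take m = a.take m → c < b
  | 0, _, _, _, _, hne, _ => absurd rfl hne
  | _ + 1, [], [], _, hab, _, _ => absurd hab (lt_irrefl _)
  | _ + 1, [], _ :: _, c, _, _, hc => by
    obtain rfl : c = [] := by simpa using hc
    exact nil_lt_cons _ _
  | _ + 1, _ :: _, [], _, hab, _, _ => absurd hab (not_lt_nil _)
  | _ + 1, _ :: _, _ :: _, [], _, _, hc => by simp at hc
  | _ + 1, _ :: _, _ :: _, _ :: _, hab, hne, hc => by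
    simp only [take_succ_cons, cons.injEq] at hne hc
    obtain ⟨rfl, hc⟩ := hc
    rcases cons_lt_cons_iff.1 hab with h | ⟨rfl, h⟩
    · exact cons_lt_cons_iff.2 (Or.inl h)
    · exact cons_lt_cons_iff.2 (Or.inr ⟨rfl, lt_of_take_eq_of_take_ne h (by simpa using hne) hc⟩)

end List

open List

variable {k : ℕ}

theorem exists_isNecklace_isRotated_le (w : List (Fin k)) :
    ∃ γ, w ~r γ ∧ IsNecklace γ ∧ γ ≤ w := by
  obtain ⟨γ, hγ, hmin⟩ := w.cyclicPermutations.toFinset.exists_min_image id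
    ⟨w, by simpa [mem_cyclicPermutations_iff] using IsRotated.refl w⟩
  simp only [mem_toFinset, mem_cyclicPermutations_iff, id] at hγ hmin
  refine ⟨γ, hγ.symm, fun r => hmin _ ((IsRotated.forall γ r).trans hγ), hmin w (.refl w)⟩

theorem IsNecklace.le_rotate_of_forall₂ {α w : List (Fin k)} (hα : IsNecklace α)
    (h : Forall₂ (· ≤ ·) α w) (r : ℕ) : α ≤ w.rotate r :=
  (hα r).trans (h.rotate r).le

theorem IsNecklace.take_eq_of_consecutive {α β : List (Fin k)} (hα : IsNecklace α) (hlt : α < β)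
    (hadj : ∀ γ : List (Fin k), γ.length = α.length → IsNecklace γ → ¬ (α < γ ∧ γ < β))
    {c : Fin k} (hc : ∀ x, x ≤ c) {m : ℕ} (hm : m < α.length) (hαm : α[m] ≠ c) :
    α.take m = β.take m := by
  by_contra hne
  set w := α.take m ++ replicate (α.length - m) c with hw
  have hmw : (α.take m).length = m := length_take_of_le hm.le
  have hαw : Forall₂ (· ≤ ·) α w := by
    rw [← take_append_drop m α, hw, ← length_drop]
    exact rel_append (forall₂_refl _) (forall₂_le_replicate fun x _ => hc x)
  have hwα : w ≠ α := by
    intro h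
    have hwm : w[m]? = some c := by
      rw [hw, getElem?_append_right hmw.le, hmw, Nat.sub_self, getElem?_replicate,
        if_pos (by omega)]
    rw [h, getElem?_eq_getElem hm] at hwm
    exact hαm (Option.some_inj.1 hwm)
  have hwβ : w < β := lt_of_take_eq_of_take_ne hlt hne (take_left' hmw)
  obtain ⟨γ, ⟨r, rfl⟩, hγ, hγw⟩ := exists_isNecklace_isRotated_le w
  have hαγ : α ≠ w.rotate r := by
    intro h
    have hrot : α.rotate r = w.rotate r :=
      ((hαw.rotate r).le).antisymm (h ▸ hα r)
    exact hwα (rotate_eq_rotate.1 hrot).symm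
  exact hadj _ (by simp [hw]; omega) hγ
    ⟨(hα.le_rotate_of_forall₂ hαw r).lt_of_ne hαγ, hγw.trans_lt hwβ⟩

theorem stmt_1 (n k : ℕ) (hk : 2 ≤ k) (α β : List (Fin k))
    (hαlen : α.length = n)
    (hα : IsNecklace α)
    (hlt : α < β)
    (hadj : ∀ γ : List (Fin k), γ.length = n → IsNecklace γ → ¬ (α < γ ∧ γ < β))
    (j : ℕ)
    -- j is the smallest positive integer with a_{n-j} ≠ k-1 (1-based indexing)
    (hjne : α[n - j - 1]? ≠ some ⟨k - 1, by omega⟩) :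
    α.take (n - j - 1) = β.take (n - j - 1) := by
  subst hαlen
  rcases Nat.eq_zero_or_pos α.length with h0 | hpos
  · simp [h0]
  have hm : α.length - j - 1 < α.length := by omega
  exact hα.take_eq_of_consecutive hlt hadj (c := ⟨k - 1, by omega⟩)
    (fun x => Fin.le_iff_val_le_val.2 (Nat.le_sub_one_of_lt x.isLt)) hm
    (by simpa [getElem?_eq_getElem hm] using hjne)
end

section
/- If β = b_1...b_n is a k-ary necklace of length n and s is an index with b_s ≠ 0, then the string 0^{s−1} b_s b_{s+1} ... b_n (replacing the first s−1 symbols of β by 0) is also a necklace. -/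
lemma aux_append_le {α : Type*} [LinearOrder α] (s : List α) {t₁ t₂ : List α} (h : t₁ ≤ t₂) :
    s ++ t₁ ≤ s ++ t₂ := by
  rcases h.lt_or_eq with h | rfl
  · exact le_of_lt (List.Lex.append_left _ h s)
  · rfl

lemma aux_lex_rep {α : Type*} [LinearOrder α] {z : α} (hz : ∀ a, z ≤ a) :
    ∀ (m : ℕ) (x t : List α), List.Lex (·<·) x (List.replicate m z ++ t) → m ≤ x.length →
      x.take m = List.replicate m z ∧ List.Lex (·<·) (x.drop m) t := by
  intro m
  induction m with
  | zero => intro x t h _; simpa using h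
  | succ m ih =>
    intro x t h hm
    cases x with
    | nil => simp at hm
    | cons a x' =>
      rw [List.replicate_succ, List.cons_append] at h
      cases h with
      | rel h1 => exact absurd h1 (hz a).not_gt
      | cons h2 =>
        obtain ⟨h3, h4⟩ := ih x' t h2 (by simpa using hm)
        simp [List.replicate_succ, h3, h4]

lemma aux_le_rep {α : Type*} [LinearOrder α] {z : α} (hz : ∀ a, z ≤ a) (m : ℕ) (x t : List α)
    (h : x ≤ List.replicate m z ++ t) (hm : m ≤ x.length) :
    x.take m = List.replicate m z ∧ x.drop m ≤ t := by
  rcases h.lt_or_eq with h | rfl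
  · obtain ⟨h1, h2⟩ := aux_lex_rep hz m x t h hm
    exact ⟨h1, le_of_lt h2⟩
  · exact ⟨by simp, by simp⟩

theorem stmt_3 (n k s : ℕ) (hk : 1 ≤ k) (β : List (Fin k))
    (hβlen : β.length = n) (hβ : IsNecklace β)
    (hs1 : 1 ≤ s) (hsn : s ≤ n)
    (hbs : β[s - 1]? ≠ some ⟨0, by omega⟩) :
    IsNecklace (List.replicate (s - 1) (⟨0, by omega⟩ : Fin k) ++ β.drop (s - 1)) := by
  have hk0 : 0 < k := hk
  set z : Fin k := ⟨0, hk0⟩ with hzdef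
  have hz : ∀ a : Fin k, z ≤ a := fun a => by simp [Fin.le_def, hzdef]
  set m := s - 1 with hmdef
  have hmn : m < n := by omega
  have hmval : m < β.length := by omega
  have hbm : β[m] ≠ z := by
    rw [List.getElem?_eq_getElem hmval] at hbs
    simpa using hbs
  set δ := β.drop m with hδdef
  set γ := List.replicate m z ++ δ with hγdef
  have hγlen : γ.length = n := by simp [hγdef, hδdef, hβlen]; omega
  have hδlen : δ.length = n - m := by simp [hδdef, hβlen]
  -- β is all zero leads to contradiction; more precisely if β[n-1] = z then contradiction
  have hlastcase : β[n-1]'(by omega) = z → False := by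
    intro hlast
    have hclaim : ∀ i, i ≤ n → β.take i = List.replicate i z := by
      intro i
      induction i with
      | zero => simp
      | succ i ih =>
        intro hin
        have hrot := hβ (n-1)
        have hdropeq : β.drop (n-1) = [z] := by
          rw [List.drop_eq_getElem_cons (by omega)]
          simp [hlast, hβlen, show n - 1 + 1 = n by omega]
        rw [List.rotate_eq_drop_append_take (by omega), hdropeq] at hrot
        have htk : (([z] ++ β.take (n-1)).take (i+1)) = List.replicate (i+1) z := by
          simp only [List.cons_append, List.nil_append, List.take_succ_cons,
            List.take_take, List.replicate_succ]
          rw [show min i (n-1) = i by omega, ih (by omega)]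
        have heq : ([z] ++ β.take (n-1)) =
            List.replicate (i+1) z ++ (([z] ++ β.take (n-1)).drop (i+1)) := by
          conv_lhs => rw [← List.take_append_drop (i+1) ([z] ++ β.take (n-1))]
          rw [htk]
        rw [heq] at hrot
        exact (aux_le_rep hz (i+1) β _ hrot (by omega)).1
    have hall : β = List.replicate n z := by
      have := hclaim n (le_refl n)
      rwa [List.take_of_length_le (by omega)] at this
    apply hbm
    have h2 : β[m]? = some z := by rw [hall]; simp [List.getElem?_replicate, hmn]
    rw [List.getElem?_eq_getElem hmval] at h2
    simpa using h2
  have hn0 : 0 < n := by omega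
  suffices H : ∀ r' < n, γ ≤ γ.rotate r' by
    intro r
    rw [← List.rotate_mod, hγlen]
    exact H _ (Nat.mod_lt _ hn0)
  intro r' hr'n
  rcases Nat.eq_zero_or_pos r' with hr0 | hr0
  · rw [hr0, List.rotate_zero]
  rcases le_or_gt r' m with hrm | hrm
  · -- small rotation: lands inside the zero block
    rw [List.rotate_eq_drop_append_take (by omega)]
    have hdrop : γ.drop r' = List.replicate (m - r') z ++ δ := by
      rw [hγdef, List.drop_append_of_le_length (by simpa using hrm)]
      simp
    have htake : γ.take r' = List.replicate r' z := by
      rw [hγdef, List.take_append_of_le_length (by simpa using hrm)]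
      simp [Nat.min_eq_left hrm]
    rw [hdrop, htake]
    have hsplit : γ = List.replicate (m - r') z ++ (List.replicate r' z ++ δ) := by
      rw [hγdef, ← List.append_assoc, ← List.replicate_add]
      congr 2
      omega
    rw [hsplit, List.append_assoc]
    apply aux_append_le
    -- replicate r' z ++ δ ≤ δ ++ replicate r' z
    obtain ⟨d, δ', hδcons⟩ : ∃ d δ', δ = d :: δ' := by
      cases hδ : δ with
      | nil => exfalso; rw [hδ] at hδlen; simp at hδlen; omega
      | cons d δ' => exact ⟨d, δ', rfl⟩
    have hd : d = β[m] := by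
      have : δ[0]'(by rw [hδlen]; omega) = β[m] := by
        simp [hδdef]
      simp only [hδcons, List.getElem_cons_zero] at this
      exact this
    have hzd : z < d := by
      rw [hd]
      exact lt_of_le_of_ne (hz _) (Ne.symm hbm)
    obtain ⟨r'', rfl⟩ : ∃ r'', r' = r'' + 1 := ⟨r' - 1, by omega⟩
    rw [hδcons, List.replicate_succ, List.cons_append, List.cons_append]
    exact le_of_lt (List.Lex.rel hzd)
  · -- large rotation
    by_contra hcon
    have hlt : γ.rotate r' < γ := not_le.mp hcon
    have hlex : List.Lex (·<·) (γ.rotate r') (List.replicate m z ++ δ) := hlt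
    obtain ⟨htake, -⟩ := aux_lex_rep hz m (γ.rotate r') δ hlex
      (by rw [List.length_rotate, hγlen]; omega)
    have hdropγ : γ.drop r' = β.drop r' := by
      simp only [hγdef, hδdef, List.drop_append, List.drop_replicate,
        List.length_replicate, List.drop_drop]
      rw [show m - r' = 0 by omega, show m + (r' - m) = r' by omega]
      simp
    rw [List.rotate_eq_drop_append_take (by omega), hdropγ] at htake hlt
    rcases le_or_gt (r' + m) n with hsmall | hbig
    · -- the m zeros all come from β: β itself starts with m zeros, so γ = β
      have htk2 : (β.drop r').take m = List.replicate m z := by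
        rw [List.take_append_of_le_length (by rw [List.length_drop, hβlen]; omega)] at htake
        exact htake
      have hrotβ : β.rotate r' = List.replicate m z ++ ((β.drop r').drop m ++ β.take r') := by
        rw [List.rotate_eq_drop_append_take (by omega)]
        conv_lhs => rw [← List.take_append_drop m (β.drop r')]
        rw [htk2, List.append_assoc]
      have hβtake : β.take m = List.replicate m z := by
        have := hβ r'
        rw [hrotβ] at this
        exact (aux_le_rep hz m β _ this (by omega)).1
      have hγβ : γ = β := by
        rw [hγdef, hδdef, ← hβtake, List.take_append_drop]
      rw [hγβ] at hlt
      rw [← List.rotate_eq_drop_append_take (by omega)] at hlt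
      exact absurd (hβ r') (not_le.mpr hlt)
    · -- wrap-around: forces β[n-1] = z
      apply hlastcase
      have hj : n - r' - 1 < m := by omega
      have hlen1 : n - r' - 1 < (β.drop r').length := by rw [List.length_drop, hβlen]; omega
      have h1 : ((β.drop r' ++ γ.take r').take m)[n - r' - 1]? = some z := by
        rw [htake]; simp [List.getElem?_replicate, hj]
      rw [List.getElem?_take] at h1
      rw [if_pos hj] at h1
      rw [List.getElem?_append, if_pos hlen1] at h1
      rw [List.getElem?_drop] at h1
      rw [show r' + (n - r' - 1) = n - 1 by omega] at h1
      rw [List.getElem?_eq_getElem (by omega)] at h1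
      simpa using h1
end
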